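/- (Holevo–Helstrom bound) For density matrices ρ₀ and ρ₁ and any operator Π with 0 ≤ Π ≤ I, it holds that (1/2)·(1 + Tr(Πρ₀) − Tr(Πρ₁)) ≤ 1/2 + (1/2)·T(ρ₀,ρ₁), i.e., Tr(Πρ₀) − Tr(Πρ₁) ≤ T(ρ₀,ρ₁). -/

import Mathlib

open Matrix ComplexOrder
open scoped Matrix.Norms.L2Operator Kronecker

noncomputable section

variable {m : Type*} [Fintype m] [DecidableEq m]

/-- A density matrix: positive semidefinite with unit trace. -/
def IsDensity (ρ : Matrix m m ℂ) : Prop := ρ.PosSemidef ∧ ρ.trace = 1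

/-- The square root of a positive semidefinite matrix (as defined in Mathlib, Dec 2024). -/
def Matrix.PosSemidef.sqrt {n 𝕜 : Type*} [Fintype n] [DecidableEq n] [RCLike 𝕜]
    {A : Matrix n n 𝕜} (hA : A.PosSemidef) : Matrix n n 𝕜 :=
  hA.1.eigenvectorUnitary.1 * diagonal ((RCLike.ofReal : ℝ → 𝕜) ∘ (√·) ∘ hA.1.eigenvalues) *
    (star hA.1.eigenvectorUnitary : Matrix n n 𝕜)

/-- The trace norm `‖A‖₁ = Tr √(AᴴA)`. -/
def traceNorm (A : Matrix m m ℂ) : ℝ :=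
  ((Matrix.posSemidef_conjTranspose_mul_self A).sqrt).trace.re

/-- The trace distance `T(ρ,σ) = ‖ρ − σ‖₁ / 2`. -/
def traceDist (ρ σ : Matrix m m ℂ) : ℝ := traceNorm (ρ - σ) / 2

/-- The fidelity `F(ρ,σ) = ‖√ρ √σ‖₁`. -/
def fid {ρ σ : Matrix m m ℂ} (hρ : ρ.PosSemidef) (hσ : σ.PosSemidef) : ℝ :=
  traceNorm (hρ.sqrt * hσ.sqrt)

/-- The sign function applied to a Hermitian matrix via its spectral decomposition. -/
def signMat {A : Matrix m m ℂ} (hA : A.IsHermitian) : Matrix m m ℂ :=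
  hA.cfc (fun x => Real.sign x)

/-- The outer product `|ψ⟩⟨φ|`. -/
def outer (ψ φ : m → ℂ) : Matrix m m ℂ := Matrix.vecMulVec ψ (star φ)

variable {α β : Type*} [Fintype α] [DecidableEq α] [Fintype β] [DecidableEq β]

/-- Partial trace over the first (A) factor. -/
def ptraceA (M : Matrix (α × β) (α × β) ℂ) : Matrix β β ℂ :=
  Matrix.of fun r r' => ∑ a, M (a, r) (a, r')

/-- Partial trace over the second (R) factor. -/
def ptraceR (M : Matrix (α × β) (α × β) ℂ) : Matrix α α ℂ :=
  Matrix.of fun a a' => ∑ r, M (a, r) (a', r)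

open scoped MatrixOrder in
lemma Matrix.PosSemidef.sqrt_eq_cfc_sqrt {A : Matrix m m ℂ} (hA : A.PosSemidef) :
    hA.sqrt = CFC.sqrt A := by
  rw [CFC.sqrt_eq_cfc, cfc_nnreal_eq_real _ A, hA.1.cfc_eq]
  simp only [IsHermitian.cfc, Matrix.PosSemidef.sqrt]
  congr 3
  funext x
  simp [Real.coe_toNNReal', Real.sqrt_eq_zero', le_max_iff]
  rw [max_eq_left (hA.eigenvalues_nonneg x)]

open scoped MatrixOrder in
lemma Matrix.PosSemidef.sqrt_mul_self {A : Matrix m m ℂ} (hA : A.PosSemidef) :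
    hA.sqrt * hA.sqrt = A := by
  rw [hA.sqrt_eq_cfc_sqrt, CFC.sqrt_mul_sqrt_self A (Matrix.nonneg_iff_posSemidef.mpr hA)]

open scoped MatrixOrder in
lemma Matrix.PosSemidef.posSemidef_sqrt {A : Matrix m m ℂ} (hA : A.PosSemidef) :
    hA.sqrt.PosSemidef := by
  rw [hA.sqrt_eq_cfc_sqrt, ← Matrix.nonneg_iff_posSemidef]
  exact CFC.sqrt_nonneg A

open scoped MatrixOrder in
lemma Matrix.PosSemidef.eq_sqrt_of_sq_eq {A B : Matrix m m ℂ} (hB : B.PosSemidef)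
    (hA : A.PosSemidef) (h : B ^ 2 = A) : B = hA.sqrt := by
  rw [hA.sqrt_eq_cfc_sqrt, eq_comm, CFC.sqrt_eq_iff A B (Matrix.nonneg_iff_posSemidef.mpr hA)
    (Matrix.nonneg_iff_posSemidef.mpr hB), ← pow_two, h]

lemma trace_re_nonneg_of_psd {A : Matrix m m ℂ} (hA : A.PosSemidef) : 0 ≤ A.trace.re := by
  rw [Matrix.trace, Complex.re_sum]
  refine Finset.sum_nonneg fun i _ => ?_
  have := hA.re_dotProduct_nonneg (Pi.single i 1)
  simpa [dotProduct, Pi.single_apply, Finset.sum_ite_eq, Matrix.mulVec_single,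
    Matrix.diag] using this

lemma trace_mul_re_nonneg_of_psd {A B : Matrix m m ℂ} (hA : A.PosSemidef)
    (hB : B.PosSemidef) : 0 ≤ (A * B).trace.re := by
  have h1 : (hA.sqrt * B * hA.sqrt).trace = (A * B).trace := by
    rw [Matrix.trace_mul_cycle, hA.sqrt_mul_self]
  have hpsd : (hA.sqrt * B * hA.sqrt).PosSemidef := by
    have := hB.mul_mul_conjTranspose_same hA.sqrt
    rwa [hA.posSemidef_sqrt.1.eq] at this
  rw [← h1]
  exact trace_re_nonneg_of_psd hpsd

/-- Holevo–Helstrom bound: for any `0 ≤ Π ≤ I`,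
`Tr(Πρ₀) − Tr(Πρ₁) ≤ T(ρ₀,ρ₁)`. -/
theorem holevoHelstrom_bound
    {ρ₀ ρ₁ : Matrix m m ℂ} (h₀ : IsDensity ρ₀) (h₁ : IsDensity ρ₁)
    {Pi0 : Matrix m m ℂ} (hPi : Pi0.PosSemidef) (hPi' : (1 - Pi0).PosSemidef) :
    (Pi0 * ρ₀).trace.re - (Pi0 * ρ₁).trace.re ≤ traceDist ρ₀ ρ₁ := by
  set Δ := ρ₀ - ρ₁ with hΔdef
  have hΔ : Δ.IsHermitian := h₀.1.1.sub h₁.1.1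
  set U : Matrix m m ℂ := (hΔ.eigenvectorUnitary : Matrix m m ℂ) with hUdef
  set d := hΔ.eigenvalues with hddef
  have hU1 : star U * U = 1 := Matrix.mem_unitaryGroup_iff'.mp hΔ.eigenvectorUnitary.2
  have hkey : ∀ (D E : Matrix m m ℂ), (U * D * star U) * (U * E * star U) = U * (D * E) * star U := by
    intro D E
    calc (U * D * star U) * (U * E * star U)
        = U * D * ((star U * U) * (E * star U)) := by simp only [Matrix.mul_assoc]
      _ = U * (D * E) * star U := by rw [hU1, one_mul]; simp only [Matrix.mul_assoc]
  set P : Matrix m m ℂ := U * Matrix.diagonal (fun i => ((max (d i) 0 : ℝ) : ℂ)) * star U with hPdef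
  set N : Matrix m m ℂ := U * Matrix.diagonal (fun i => ((max (-(d i)) 0 : ℝ) : ℂ)) * star U with hNdef
  have hdiagP : (Matrix.diagonal (fun i => ((max (d i) 0 : ℝ) : ℂ))).PosSemidef :=
    Matrix.posSemidef_diagonal_iff.mpr fun i =>
      Complex.zero_le_real.mpr (le_max_right _ _)
  have hdiagN : (Matrix.diagonal (fun i => ((max (-(d i)) 0 : ℝ) : ℂ))).PosSemidef :=
    Matrix.posSemidef_diagonal_iff.mpr fun i =>
      Complex.zero_le_real.mpr (le_max_right _ _)
  have hP : P.PosSemidef := by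
    simpa [hPdef, Matrix.star_eq_conjTranspose] using hdiagP.mul_mul_conjTranspose_same U
  have hN : N.PosSemidef := by
    simpa [hNdef, Matrix.star_eq_conjTranspose] using hdiagN.mul_mul_conjTranspose_same U
  have hspec : Δ = U * Matrix.diagonal (fun i => ((d i : ℝ) : ℂ)) * star U :=
    hΔ.spectral_theorem
  -- P - N = Δ
  have hPN : P - N = Δ := by
    rw [hPdef, hNdef, ← Matrix.sub_mul, ← Matrix.mul_sub, Matrix.diagonal_sub]
    rw [show (fun i => ((max (d i) 0 : ℝ) : ℂ) - ((max (-(d i)) 0 : ℝ) : ℂ))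
        = (fun i => ((d i : ℝ) : ℂ)) from funext fun i => by
      rw [← Complex.ofReal_sub, max_zero_sub_max_neg_zero_eq_self]]
    exact hspec.symm
  -- P + N = sqrt (Δᴴ Δ)
  have habs : P + N = U * Matrix.diagonal (fun i => ((|d i| : ℝ) : ℂ)) * star U := by
    rw [hPdef, hNdef, ← Matrix.add_mul, ← Matrix.mul_add, Matrix.diagonal_add]
    rw [show (fun i => ((max (d i) 0 : ℝ) : ℂ) + ((max (-(d i)) 0 : ℝ) : ℂ))
        = (fun i => ((|d i| : ℝ) : ℂ)) from funext fun i => by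
      rw [← Complex.ofReal_add, max_zero_add_max_neg_zero_eq_abs_self]]
  have hSsq : (P + N) ^ 2 = Δᴴ * Δ := by
    rw [habs, hΔ.eq, pow_two, hkey, Matrix.diagonal_mul_diagonal]
    rw [show (fun i => ((|d i| : ℝ) : ℂ) * ((|d i| : ℝ) : ℂ))
        = (fun i => ((d i : ℝ) : ℂ) * ((d i : ℝ) : ℂ)) from funext fun i => by
      rw [← Complex.ofReal_mul, ← Complex.ofReal_mul, abs_mul_abs_self]]
    rw [← Matrix.diagonal_mul_diagonal, ← hkey, ← hspec]
  have hSpsd : (P + N).PosSemidef := hP.add hN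
  have hSeq : P + N = (Matrix.posSemidef_conjTranspose_mul_self Δ).sqrt :=
    hSpsd.eq_sqrt_of_sq_eq (Matrix.posSemidef_conjTranspose_mul_self Δ) hSsq
  -- traces
  have htr : ∀ D : Matrix m m ℂ, (U * D * star U).trace = D.trace := by
    intro D
    rw [Matrix.trace_mul_cycle, hU1, one_mul]
  have htrP : P.trace.re = ∑ i, max (d i) 0 := by
    rw [hPdef, htr, Matrix.trace_diagonal, Complex.re_sum]
    simp
  have htrN : N.trace.re = ∑ i, max (-(d i)) 0 := by
    rw [hNdef, htr, Matrix.trace_diagonal, Complex.re_sum]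
    simp
  -- trace of Δ is zero
  have htrΔ : Δ.trace = 0 := by
    rw [hΔdef, Matrix.trace_sub, h₀.2, h₁.2, sub_self]
  have hsum_eq : ∑ i, max (d i) 0 = ∑ i, max (-(d i)) 0 := by
    have h1 : P.trace.re - N.trace.re = 0 := by
      have h0 : (P - N).trace = 0 := by rw [hPN, htrΔ]
      have h0' := congrArg Complex.re h0
      rwa [Matrix.trace_sub, Complex.sub_re] at h0'
    rw [htrP, htrN] at h1
    linarith
  -- trace distance computation
  have hdist : traceDist ρ₀ ρ₁ = ∑ i, max (d i) 0 := by
    rw [traceDist, traceNorm, ← hΔdef, ← hSeq]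
    have : (P + N).trace.re = P.trace.re + N.trace.re := by
      rw [Matrix.trace_add, Complex.add_re]
    rw [this, htrP, htrN, ← hsum_eq]
    ring
  -- main inequality
  have hkey2 : (Pi0 * ρ₀).trace.re - (Pi0 * ρ₁).trace.re
      = (Pi0 * P).trace.re - (Pi0 * N).trace.re := by
    have hm : Pi0 * ρ₀ - Pi0 * ρ₁ = Pi0 * P - Pi0 * N := by
      rw [← Matrix.mul_sub, ← Matrix.mul_sub, hPN]
    have hm' := congrArg (fun M => (Matrix.trace M).re) hm
    simpa [Matrix.trace_sub, Complex.sub_re] using hm'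
  rw [hkey2, hdist]
  have h2 : 0 ≤ (Pi0 * N).trace.re := trace_mul_re_nonneg_of_psd hPi hN
  have h3 : (Pi0 * P).trace.re ≤ P.trace.re := by
    have h4 : 0 ≤ ((1 - Pi0) * P).trace.re := trace_mul_re_nonneg_of_psd hPi' hP
    have h5 : (1 - Pi0) * P = P - Pi0 * P := by rw [Matrix.sub_mul, one_mul]
    rw [h5, Matrix.trace_sub, Complex.sub_re] at h4
    linarith
  rw [← htrP]
  linarith
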